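/- arXiv:1611.04701 — 7 statements merged into one kernel-verified Lean document; each statement's English description precedes it below -/
import Mathlib

section
/- Let $A$ be a $q \times p$ real matrix and $\Gamma = A^T A$. Suppose $\Gamma$ satisfies the Lower-RE condition with curvature $\alpha > 0$ and tolerance $\tau > 0$, i.e., $\theta^T \Gamma \theta \ge \alpha \|\theta\|_2^2 - \tau \|\theta\|_1^2$ for all $\theta \in \mathbb{R}^p$. If $\tau (1+k_0)^2 s_0 \le \alpha/2$, then $A$ satisfies the restricted eigenvalue condition $RE(s_0, k_0, A)$ with $1/K(s_0,k_0,A) \ge \sqrt{\alpha/2} > 0$; that is, for every subset $J \subseteq \{1,\dots,p\}$ with $|J| \le s_0$ and every nonzero $v$ with $\|v_{J^c}\|_1 \le k_0 \|v_J\|_1$, we have $\|Av\|_2 \ge \sqrt{\alpha/2}\, \|v_J\|_2$. -/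
/-!
For a vector `v` in the cone `‖v_{Jᶜ}‖₁ ≤ k₀ ‖v_J‖₁` with `#J ≤ s₀`, Cauchy–Schwarz on `J` gives
`‖v‖₁² ≤ (1 + k₀)² s₀ ‖v_J‖₂²`, so under `τ (1 + k₀)² s₀ ≤ α / 2` the tolerance term of the
Lower-RE condition costs at most `α / 2 · ‖v_J‖₂²`, while the curvature term `α ‖v‖₂²` is at least
`α ‖v_J‖₂²`. Since `vᵀ Aᵀ A v = ‖A v‖₂²`, this leaves `‖A v‖₂² ≥ α / 2 · ‖v_J‖₂²`.
-/

open Finset Matrix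

theorem Matrix.dotProduct_transpose_mul_mulVec_self {m n R : Type*} [Fintype m] [Fintype n]
    [CommRing R] (A : Matrix m n R) (v : n → R) :
    v ⬝ᵥ (Aᵀ * A) *ᵥ v = ∑ j, (A *ᵥ v) j ^ 2 := by
  rw [← mulVec_mulVec, dotProduct_mulVec, vecMul_transpose]
  simp only [dotProduct, sq]

section Cone

variable {ι : Type*} [Fintype ι] [DecidableEq ι] {J : Finset ι} {v : ι → ℝ} {k : ℝ}

theorem sq_sum_abs_le_of_sum_compl_abs_le (hcone : ∑ i ∈ Jᶜ, |v i| ≤ k * ∑ i ∈ J, |v i|) :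
    (∑ i, |v i|) ^ 2 ≤ (1 + k) ^ 2 * #J * ∑ i ∈ J, v i ^ 2 := by
  have hsplit : ∑ i, |v i| ≤ (1 + k) * ∑ i ∈ J, |v i| := by
    rw [← sum_add_sum_compl J]
    linarith
  have hCS : (∑ i ∈ J, |v i|) ^ 2 ≤ #J * ∑ i ∈ J, v i ^ 2 := by
    simpa only [sq_abs] using sq_sum_le_card_mul_sum_sq (s := J) (f := fun i => |v i|)
  calc (∑ i, |v i|) ^ 2 ≤ ((1 + k) * ∑ i ∈ J, |v i|) ^ 2 :=
        pow_le_pow_left₀ (by positivity) hsplit 2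
    _ = (1 + k) ^ 2 * (∑ i ∈ J, |v i|) ^ 2 := by ring
    _ ≤ (1 + k) ^ 2 * (#J * ∑ i ∈ J, v i ^ 2) := by gcongr
    _ = (1 + k) ^ 2 * #J * ∑ i ∈ J, v i ^ 2 := by ring

theorem half_mul_sum_sq_le_of_lowerRE {α τ Q : ℝ} {s : ℕ} (hτ : 0 ≤ τ)
    (hcond : τ * (1 + k) ^ 2 * s ≤ α / 2) (hJ : #J ≤ s)
    (hcone : ∑ i ∈ Jᶜ, |v i| ≤ k * ∑ i ∈ J, |v i|)
    (hQ : α * ∑ i, v i ^ 2 - τ * (∑ i, |v i|) ^ 2 ≤ Q) :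
    α / 2 * ∑ i ∈ J, v i ^ 2 ≤ Q := by
  have hα : 0 ≤ α := by nlinarith [mul_nonneg (mul_nonneg hτ (sq_nonneg (1 + k))) s.cast_nonneg]
  have hJ_nonneg : 0 ≤ ∑ i ∈ J, v i ^ 2 := sum_nonneg fun i _ => sq_nonneg (v i)
  have htol : τ * (∑ i, |v i|) ^ 2 ≤ α / 2 * ∑ i ∈ J, v i ^ 2 :=
    calc τ * (∑ i, |v i|) ^ 2 ≤ τ * ((1 + k) ^ 2 * #J * ∑ i ∈ J, v i ^ 2) :=
          mul_le_mul_of_nonneg_left (sq_sum_abs_le_of_sum_compl_abs_le hcone) hτ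
      _ ≤ τ * ((1 + k) ^ 2 * s * ∑ i ∈ J, v i ^ 2) := by gcongr
      _ = τ * (1 + k) ^ 2 * s * ∑ i ∈ J, v i ^ 2 := by ring
      _ ≤ α / 2 * ∑ i ∈ J, v i ^ 2 := by gcongr
  have hcurv : α * ∑ i ∈ J, v i ^ 2 ≤ α * ∑ i, v i ^ 2 :=
    mul_le_mul_of_nonneg_left
      (sum_le_sum_of_subset_of_nonneg (subset_univ J) fun i _ _ => sq_nonneg (v i)) hα
  linarith

end Cone

theorem lowerRE_implies_RE_general {q p : ℕ} (A : Matrix (Fin q) (Fin p) ℝ)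
    (α τ : ℝ) (hτ : 0 < τ) (s₀ : ℕ) (k₀ : ℝ)
    (hLRE : ∀ θ : Fin p → ℝ,
      θ ⬝ᵥ (Aᵀ * A).mulVec θ ≥ α * (∑ i, θ i ^ 2) - τ * (∑ i, |θ i|) ^ 2)
    (hcond : τ * (1 + k₀) ^ 2 * s₀ ≤ α / 2) :
    ∀ J : Finset (Fin p), J.card ≤ s₀ → ∀ v : Fin p → ℝ, v ≠ 0 →
      (∑ i ∈ Jᶜ, |v i|) ≤ k₀ * (∑ i ∈ J, |v i|) →
      Real.sqrt (α / 2) * Real.sqrt (∑ i ∈ J, v i ^ 2) ≤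
        Real.sqrt (∑ j, (A.mulVec v j) ^ 2) := by
  intro J hJ v _ hcone
  rw [← Real.sqrt_mul' _ (sum_nonneg fun i _ => sq_nonneg (v i))]
  apply Real.sqrt_le_sqrt
  rw [← dotProduct_transpose_mul_mulVec_self]
  exact half_mul_sum_sq_le_of_lowerRE hτ.le hcond hJ hcone (hLRE v)

/-- Lower-RE condition with curvature α and tolerance τ implies the
restricted eigenvalue condition RE(s₀, k₀, A) with constant √(α/2),
provided τ (1+k₀)² s₀ ≤ α/2. -/
theorem lowerRE_implies_RE {q p : ℕ} (A : Matrix (Fin q) (Fin p) ℝ)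
    (α τ : ℝ) (hα : 0 < α) (hτ : 0 < τ) (s₀ : ℕ) (k₀ : ℝ) (hk₀ : 0 < k₀)
    (hLRE : ∀ θ : Fin p → ℝ,
      θ ⬝ᵥ (Aᵀ * A).mulVec θ ≥ α * (∑ i, θ i ^ 2) - τ * (∑ i, |θ i|) ^ 2)
    (hcond : τ * (1 + k₀) ^ 2 * s₀ ≤ α / 2) :
    ∀ J : Finset (Fin p), J.card ≤ s₀ → ∀ v : Fin p → ℝ, v ≠ 0 →
      (∑ i ∈ Jᶜ, |v i|) ≤ k₀ * (∑ i ∈ J, |v i|) →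
      Real.sqrt (α / 2) * Real.sqrt (∑ i ∈ J, v i ^ 2) ≤
        Real.sqrt (∑ j, (A.mulVec v j) ^ 2) :=
  lowerRE_implies_RE_general A α τ hτ s₀ k₀ hLRE hcond
end

section
/- For every $1 \le s \le m$ and every index set $I \subseteq \{1,\dots,m\}$ with $|I| \le s$, the set $\sqrt{|I|}\, B_1^m \cap S^{m-1}$ is contained in $2\,\mathrm{conv}(U_s \cap S^{m-1})$, where $U_s = \{x \in \mathbb{R}^m : |\mathrm{supp}(x)| \le s\}$. -/
/-!
Sort the coordinates of `x` by decreasing absolute value and cut them into consecutive blocks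
`x₀, x₁, …` of `s` coordinates each. Every `x_k ≠ 0` is `‖x_k‖₂` times an `s`-sparse unit vector,
so `x` lies in `(∑ ‖x_k‖₂) • conv(U_s ∩ S^{m-1})` (the hull contains `0 = (e₁ + (-e₁)) / 2`).
Each entry of `x_{k+1}` is at most the average `‖x_k‖₁ / s` of the larger entries of `x_k`, hence
`‖x_{k+1}‖₂ ≤ ‖x_k‖₁ / √s`, and `∑ ‖x_k‖₂ ≤ ‖x‖₂ + ‖x‖₁ / √s ≤ 1 + 1`.
-/

open Finset Pointwise

section Convex

variable {𝕜 E κ : Type*} [Field 𝕜] [LinearOrder 𝕜] [IsStrictOrderedRing 𝕜]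
  [AddCommGroup E] [Module 𝕜 E] {C : Set E}

theorem Convex.sum_mem_sum_smul (hC : Convex 𝕜 C) (hne : C.Nonempty) {t : Finset κ}
    {c : κ → 𝕜} {x : κ → E} (hc : ∀ k ∈ t, 0 ≤ c k) (hx : ∀ k ∈ t, x k ∈ c k • C) :
    ∑ k ∈ t, x k ∈ (∑ k ∈ t, c k) • C := by
  classical
  induction t using Finset.induction_on with
  | empty => simp [Set.zero_smul_set hne]
  | insert a t ha ih =>
    rw [sum_insert ha, sum_insert ha, hC.add_smul (hc a (mem_insert_self a t))
      (sum_nonneg fun k hk => hc k (mem_insert_of_mem hk))]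
    exact Set.add_mem_add (hx a (mem_insert_self a t))
      (ih (fun k hk => hc k (mem_insert_of_mem hk)) fun k hk => hx k (mem_insert_of_mem hk))

theorem Convex.sum_mem_smul_of_sum_le (hC : Convex 𝕜 C) (h0 : (0 : E) ∈ C) {t : Finset κ}
    {c : κ → 𝕜} {x : κ → E} {r : 𝕜} (hc : ∀ k ∈ t, 0 ≤ c k) (hx : ∀ k ∈ t, x k ∈ c k • C)
    (hr : ∑ k ∈ t, c k ≤ r) : ∑ k ∈ t, x k ∈ r • C := by
  have hsum := hC.sum_mem_sum_smul ⟨0, h0⟩ hc hx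
  have hpad : (0 : E) ∈ (r - ∑ k ∈ t, c k) • C := ⟨0, h0, smul_zero _⟩
  simpa [← hC.add_smul (sum_nonneg hc) (sub_nonneg.2 hr)] using Set.add_mem_add hsum hpad

end Convex

section SparseUnitVectors

variable {ι : Type*} [Fintype ι] {s : ℕ}

def sparseUnitVectors (ι : Type*) [Fintype ι] (s : ℕ) : Set (ι → ℝ) :=
  {x | (∃ T : Finset ι, T.card ≤ s ∧ ∀ i ∉ T, x i = 0) ∧ ∑ i, x i ^ 2 = 1}

theorem neg_mem_sparseUnitVectors {x : ι → ℝ} (hx : x ∈ sparseUnitVectors ι s) :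
    -x ∈ sparseUnitVectors ι s := by
  obtain ⟨⟨T, hT, hzero⟩, hnorm⟩ := hx
  exact ⟨⟨T, hT, fun i hi => by simp [hzero i hi]⟩, by simpa using hnorm⟩

theorem single_mem_sparseUnitVectors [DecidableEq ι] (hs : 1 ≤ s) (i : ι) :
    Pi.single i 1 ∈ sparseUnitVectors ι s :=
  ⟨⟨{i}, by simpa using hs, fun j hj => by simp_all⟩, by simp [apply_ite (· ^ 2), Pi.single_apply]⟩

theorem sparseUnitVectors_nonempty [Nonempty ι] (hs : 1 ≤ s) :
    (sparseUnitVectors ι s).Nonempty := by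
  classical
  exact ⟨_, single_mem_sparseUnitVectors hs (Classical.arbitrary ι)⟩

theorem zero_mem_convexHull_sparseUnitVectors [Nonempty ι] (hs : 1 ≤ s) :
    (0 : ι → ℝ) ∈ convexHull ℝ (sparseUnitVectors ι s) := by
  obtain ⟨e, he⟩ := sparseUnitVectors_nonempty (ι := ι) hs
  have hmid := convex_convexHull ℝ (sparseUnitVectors ι s) (subset_convexHull ℝ _ he)
    (subset_convexHull ℝ _ (neg_mem_sparseUnitVectors he)) (by norm_num : (0 : ℝ) ≤ 1 / 2)
    (by norm_num : (0 : ℝ) ≤ 1 / 2) (by norm_num)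
  simpa using hmid

theorem indicator_mem_smul_sparseUnitVectors [Nonempty ι] (hs : 1 ≤ s) {T : Finset ι}
    (hT : T.card ≤ s) (x : ι → ℝ) :
    (T : Set ι).indicator x ∈ √(∑ i ∈ T, x i ^ 2) • sparseUnitVectors ι s := by
  set y := (T : Set ι).indicator x
  have hy : ∑ i, y i ^ 2 = ∑ i ∈ T, x i ^ 2 := by
    rw [← sum_indicator_subset (fun i => x i ^ 2) (subset_univ T)]
    exact sum_congr rfl fun i _ => by by_cases hi : i ∈ T <;> simp [y, hi]
  rcases eq_or_ne (∑ i ∈ T, x i ^ 2) 0 with hzero | hpos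
  · have hy0 : y = 0 := by
      funext i
      rw [Pi.zero_apply, ← sq_eq_zero_iff]
      exact (sum_eq_zero_iff_of_nonneg fun j _ => sq_nonneg (y j)).1 (hy.trans hzero) i
        (mem_univ i)
    rw [hy0, hzero, Real.sqrt_zero, Set.zero_smul_set (sparseUnitVectors_nonempty hs)]
    rfl
  · have hsqrt : √(∑ i ∈ T, x i ^ 2) ≠ 0 := by positivity
    refine ⟨(√(∑ i ∈ T, x i ^ 2))⁻¹ • y, ⟨⟨T, hT, fun i hi => by simp [y, hi]⟩, ?_⟩,
      smul_inv_smul₀ hsqrt y⟩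
    simp only [Pi.smul_apply, smul_eq_mul, mul_pow, ← mul_sum, hy, inv_pow,
      Real.sq_sqrt (sum_nonneg fun i _ => sq_nonneg (x i)), inv_mul_cancel₀ hpos]

theorem mem_smul_convexHull_sparseUnitVectors [Nonempty ι] (hs : 1 ≤ s) (x : ι → ℝ)
    (blk : ι → ℕ) {t : Finset ℕ} (ht : ∀ i, blk i ∈ t) (hcard : ∀ k, #{i | blk i = k} ≤ s)
    {r : ℝ} (hr : ∑ k ∈ t, √(∑ i with blk i = k, x i ^ 2) ≤ r) :
    x ∈ r • convexHull ℝ (sparseUnitVectors ι s) := by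
  have hx : ∑ k ∈ t, (({i | blk i = k} : Finset ι) : Set ι).indicator x = x := by
    funext i
    simp [Finset.sum_apply, Set.indicator_apply, ht i]
  rw [← hx]
  refine (convex_convexHull ℝ _).sum_mem_smul_of_sum_le
    (zero_mem_convexHull_sparseUnitVectors hs) (fun k _ => Real.sqrt_nonneg _) (fun k _ => ?_) hr
  exact Set.smul_set_mono (subset_convexHull ℝ _)
    (indicator_mem_smul_sparseUnitVectors hs (hcard k) x)

end SparseUnitVectors

section Blocks

variable {ι : Type*}

theorem mul_sum_sq_le_sq {B : Finset ι} {f : ι → ℝ} {s : ℕ} {a : ℝ} (hB : #B ≤ s)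
    (hf : ∀ i ∈ B, s * |f i| ≤ a) : s * ∑ i ∈ B, f i ^ 2 ≤ a ^ 2 := by
  rcases Nat.eq_zero_or_pos s with rfl | hs
  · simpa using sq_nonneg a
  have hterm : ∀ i ∈ B, (s : ℝ) ^ 2 * f i ^ 2 ≤ a ^ 2 := fun i hi => by
    rw [← sq_abs (f i), ← mul_pow]
    exact pow_le_pow_left₀ (by positivity) (hf i hi) 2
  have hmul : (s : ℝ) * (s * ∑ i ∈ B, f i ^ 2) ≤ s * a ^ 2 := calc
    _ = ∑ i ∈ B, (s : ℝ) ^ 2 * f i ^ 2 := by rw [mul_sum, mul_sum]; ring_nf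
    _ ≤ ∑ _i ∈ B, a ^ 2 := sum_le_sum hterm
    _ = #B * a ^ 2 := by rw [sum_const, nsmul_eq_mul]
    _ ≤ s * a ^ 2 := by gcongr
  exact le_of_mul_le_mul_left hmul (by exact_mod_cast hs)

theorem sum_sqrt_sum_sq_fiber_le [Fintype ι] (x : ι → ℝ) (blk : ι → ℕ) {s K : ℕ} (hs : 0 < s)
    (hK : ∀ i, blk i ∈ range (K + 1)) (hcard : ∀ k, #{i | blk i = k} ≤ s)
    (hdom : ∀ k i, blk i = k + 1 → s * |x i| ≤ ∑ j with blk j = k, |x j|) :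
    ∑ k ∈ range (K + 1), √(∑ i with blk i = k, x i ^ 2) ≤
      √(∑ i, x i ^ 2) + (∑ i, |x i|) / √s := by
  have head : √(∑ i with blk i = 0, x i ^ 2) ≤ √(∑ i, x i ^ 2) :=
    Real.sqrt_le_sqrt (sum_le_sum_of_subset_of_nonneg (filter_subset _ _)
      fun i _ _ => sq_nonneg _)
  have step : ∀ k, √(∑ i with blk i = k + 1, x i ^ 2) ≤ (∑ j with blk j = k, |x j|) / √s := by
    intro k
    rw [Real.sqrt_le_left (by positivity), div_pow, Real.sq_sqrt (by positivity),
      le_div_iff₀ (by positivity), mul_comm]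
    exact mul_sum_sq_le_sq (hcard _) fun i hi => hdom k i (mem_filter.1 hi).2
  have tail : ∑ k ∈ range K, ∑ j with blk j = k, |x j| ≤ ∑ i, |x i| := by
    rw [← sum_fiberwise_of_maps_to (fun i _ => hK i) (fun i => |x i|)]
    exact sum_le_sum_of_subset_of_nonneg (range_subset_range.2 K.le_succ)
      fun _ _ _ => sum_nonneg fun _ _ => abs_nonneg _
  calc _ = ∑ k ∈ range K, √(∑ i with blk i = k + 1, x i ^ 2) + √(∑ i with blk i = 0, x i ^ 2) :=
        sum_range_succ' _ _
    _ ≤ ∑ k ∈ range K, (∑ j with blk j = k, |x j|) / √s + √(∑ i, x i ^ 2) :=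
        add_le_add (sum_le_sum fun k _ => step k) head
    _ ≤ (∑ i, |x i|) / √s + √(∑ i, x i ^ 2) := by rw [← sum_div]; gcongr
    _ = _ := add_comm _ _

end Blocks

section SortedBlocks

variable {m s k : ℕ}

theorem card_filter_div_eq_le (hs : 0 < s) (k : ℕ) : #{p : Fin m | (p : ℕ) / s = k} ≤ s := by
  refine (card_le_card_of_injOn (fun p : Fin m => (p : ℕ) % s) (t := range s)
    (fun p _ => by simpa using Nat.mod_lt _ hs) ?_).trans (card_range s).le
  intro p hp q hq hpq
  simp only [coe_filter, mem_univ, true_and, Set.mem_ofPred_eq] at hp hq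
  have hp' := Nat.div_add_mod p s
  have hq' := Nat.div_add_mod q s
  rw [hp] at hp'
  rw [hq, ← show (p : ℕ) % s = q % s from hpq] at hq'
  exact Fin.ext (hp'.symm.trans hq')

theorem le_card_filter_div_eq (h : (k + 1) * s ≤ m) : s ≤ #{p : Fin m | (p : ℕ) / s = k} := by
  calc s = #((Ico (k * s) ((k + 1) * s)).attachFin fun n hn => (mem_Ico.1 hn).2.trans_le h) := by
        simp [add_mul]
    _ ≤ _ := card_le_card fun p hp => by
        simp only [mem_attachFin, mem_Ico] at hp
        simpa using Nat.div_eq_of_lt_le hp.1 hp.2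

theorem card_filter_symm_div_eq (σ : Equiv.Perm (Fin m)) :
    #{i | (σ.symm i : ℕ) / s = k} = #{p : Fin m | (p : ℕ) / s = k} :=
  card_equiv σ.symm (by simp)

theorem mul_abs_le_sum_abs_prev_block {x : Fin m → ℝ} {σ : Equiv.Perm (Fin m)}
    (hσ : Antitone fun p => |x (σ p)|) {i : Fin m} (hi : (σ.symm i : ℕ) / s = k + 1) :
    s * |x i| ≤ ∑ j with (σ.symm j : ℕ) / s = k, |x j| := by
  have hcard : s ≤ #{j | (σ.symm j : ℕ) / s = k} := by
    rw [card_filter_symm_div_eq]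
    refine le_card_filter_div_eq ?_
    calc (k + 1) * s = (σ.symm i : ℕ) / s * s := by rw [hi]
      _ ≤ σ.symm i := Nat.div_mul_le_self _ _
      _ ≤ m := (σ.symm i).isLt.le
  have hle : ∀ j ∈ ({j | (σ.symm j : ℕ) / s = k} : Finset (Fin m)), |x i| ≤ |x j| := by
    intro j hj
    have hji : σ.symm j ≤ σ.symm i :=
      Fin.le_def.2 (Nat.lt_of_div_lt_div (by rw [(mem_filter.1 hj).2, hi]; omega)).le
    simpa using hσ hji
  calc (s : ℝ) * |x i| ≤ #{j | (σ.symm j : ℕ) / s = k} * |x i| := by gcongr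
    _ ≤ _ := by rw [← nsmul_eq_mul]; exact card_nsmul_le_sum _ _ _ hle

end SortedBlocks

theorem l1ball_sphere_subset_convexHull_general {m : ℕ} (s : ℕ) (hs : 1 ≤ s)
    (I : Finset (Fin m)) (hI : I.card ≤ s) :
    {x : Fin m → ℝ | (∑ i, |x i|) ≤ Real.sqrt (I.card) ∧ (∑ i, x i ^ 2) = 1} ⊆
      (2 : ℝ) • convexHull ℝ
        ({x : Fin m → ℝ | (∃ T : Finset (Fin m), T.card ≤ s ∧ ∀ i ∉ T, x i = 0)
          ∧ (∑ i, x i ^ 2) = 1}) := by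
  rintro x ⟨hl1, hl2⟩
  have : Nonempty (Fin m) := by
    by_contra h
    simp [not_nonempty_iff.1 h] at hl2
  -- `σ` lists the coordinates by decreasing `|x i|`; block `k` is positions `k s, …, k s + s - 1`.
  set σ := Tuple.sort fun i => -|x i|
  have hσ : Antitone fun p => |x (σ p)| := fun p q hpq => by
    simpa using Tuple.monotone_sort (fun i => -|x i|) hpq
  have hrange : ∀ i, (σ.symm i : ℕ) / s ∈ range (m / s + 1) := fun i =>
    mem_range.2 (Nat.lt_succ_of_le (Nat.div_le_div_right (σ.symm i).isLt.le))
  have hcard : ∀ k, #{i | (σ.symm i : ℕ) / s = k} ≤ s := fun k =>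
    (card_filter_symm_div_eq σ).trans_le (card_filter_div_eq_le hs k)
  refine mem_smul_convexHull_sparseUnitVectors hs x _ hrange hcard ?_
  calc _ ≤ √(∑ i, x i ^ 2) + (∑ i, |x i|) / √s :=
        sum_sqrt_sum_sq_fiber_le x _ hs hrange hcard
          fun k i hi => mul_abs_le_sum_abs_prev_block hσ hi
    _ ≤ 1 + 1 := by
        rw [hl2, Real.sqrt_one]
        gcongr
        exact div_le_one_of_le₀ (hl1.trans (Real.sqrt_le_sqrt (by exact_mod_cast hI)))
          (Real.sqrt_nonneg _)
    _ = 2 := one_add_one_eq_two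

/-- Every unit vector whose ℓ₁ norm is at most √|I| (with |I| ≤ s) lies in
twice the convex hull of the s-sparse unit vectors. -/
theorem l1ball_sphere_subset_convexHull {m : ℕ} (s : ℕ) (hs : 1 ≤ s) (hsm : s ≤ m)
    (I : Finset (Fin m)) (hI : I.card ≤ s) :
    {x : Fin m → ℝ | (∑ i, |x i|) ≤ Real.sqrt (I.card) ∧ (∑ i, x i ^ 2) = 1} ⊆
      (2 : ℝ) • convexHull ℝ
        ({x : Fin m → ℝ | (∃ T : Finset (Fin m), T.card ≤ s ∧ ∀ i ∉ T, x i = 0)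
          ∧ (∑ i, x i ^ 2) = 1}) :=
  l1ball_sphere_subset_convexHull_general s hs I hI
end

section
/- For every $1 \le s \le m$ and every $\rho \in (0,1]$, the set $\sqrt{s}\, B_1^m \cap \rho B_2^m$ is contained in $(1+\rho)\,\mathrm{conv}(U_s \cap B_2^m)$, where $U_s$ is the set of $s$-sparse vectors in $\mathbb{R}^m$. -/
open Finset Pointwise

/-! Sort the coordinates of `x` by decreasing modulus and cut them into consecutive blocks of `s`.
Each block is `s`-sparse. The first has `ℓ₂`-norm at most `ρ`. Every coordinate of a later block
is at most the mean modulus of the previous block, so its `ℓ₂`-norm is at most the previous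
block's `ℓ₁`-norm divided by `√s`; these add up to at most `‖x‖₁ / √s ≤ 1`. Since
`a • C + b • C = (a + b) • C` for convex `C` and `a, b ≥ 0`, summing the blocks puts `x` in
`(1 + ρ) • C`. -/

def sparseUnitBall (ι : Type*) [Fintype ι] (s : ℕ) : Set (ι → ℝ) :=
  {x | (∃ T : Finset ι, #T ≤ s ∧ ∀ i ∉ T, x i = 0) ∧ ∑ i, x i ^ 2 ≤ 1}

-- Exchanging `i ∈ T` for `j ∉ T` cannot increase the sum over a sum-maximising `T`.
theorem Finset.exists_card_eq_forall_notMem_le {ι α : Type*} [Fintype ι]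
    [AddCommMonoid α] [LinearOrder α] [IsOrderedCancelAddMonoid α]
    (f : ι → α) {s : ℕ} (hs : s ≤ Fintype.card ι) :
    ∃ T : Finset ι, #T = s ∧ ∀ i ∈ T, ∀ j ∉ T, f j ≤ f i := by
  classical
  obtain ⟨T, hT, hmax⟩ := exists_max_image (univ.powersetCard s) (fun T => ∑ i ∈ T, f i)
    (powersetCard_nonempty.mpr (by simpa using hs))
  rw [mem_powersetCard] at hT
  refine ⟨T, hT.2, fun i hi j hj => ?_⟩
  have hj' : j ∉ T.erase i := fun h => hj (mem_of_mem_erase h)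
  have hswap : insert j (T.erase i) ∈ univ.powersetCard s := by
    rw [mem_powersetCard, card_insert_of_notMem hj', card_erase_of_mem hi,
      Nat.sub_add_cancel (card_pos.mpr ⟨i, hi⟩)]
    exact ⟨subset_univ _, hT.2⟩
  have hle := hmax _ hswap
  rw [sum_insert hj', ← sum_erase_add T f hi, add_comm (f j)] at hle
  exact le_of_add_le_add_left hle

section

variable {ι : Type*} {s : ℕ}

theorem sum_sq_le_of_mul_abs_le {x : ι → ℝ} {T : Finset ι} (hT : #T ≤ s) (hs : 0 < s) {c : ℝ}
    (hc : ∀ i ∈ T, s * |x i| ≤ c) : ∑ i ∈ T, x i ^ 2 ≤ (c / √s) ^ 2 := by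
  have hs' : (0 : ℝ) < s := by exact_mod_cast hs
  have hsq : ∀ i ∈ T, x i ^ 2 ≤ (c / s) ^ 2 := fun i hi => by
    rw [← sq_abs]
    exact pow_le_pow_left₀ (abs_nonneg _) ((le_div_iff₀' hs').mpr (hc i hi)) 2
  calc ∑ i ∈ T, x i ^ 2 ≤ #T • (c / s) ^ 2 := sum_le_card_nsmul _ _ _ hsq
    _ ≤ s * (c / s) ^ 2 := by
        rw [nsmul_eq_mul]
        exact mul_le_mul_of_nonneg_right (by exact_mod_cast hT) (sq_nonneg _)
    _ = (c / √s) ^ 2 := by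
        rw [div_pow, div_pow, Real.sq_sqrt hs'.le]
        field_simp

theorem mul_abs_indicator_compl_le_sum {x : ι → ℝ} {T : Finset ι} (hT : #T = s)
    (hTtop : ∀ i ∈ T, ∀ j ∉ T, |x j| ≤ |x i|) (j : ι) :
    s * |(T : Set ι)ᶜ.indicator x j| ≤ ∑ i ∈ T, |x i| := by
  by_cases hj : j ∈ T
  · simpa [hj] using sum_nonneg fun i _ => abs_nonneg (x i)
  · simpa [hj, ← hT] using card_nsmul_le_sum T _ _ fun i hi => hTtop i hi j hj

variable [Fintype ι]

theorem zero_mem_sparseUnitBall : (0 : ι → ℝ) ∈ sparseUnitBall ι s :=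
  ⟨⟨∅, by simp, fun _ _ => rfl⟩, by simp⟩

theorem mem_smul_convexHull_sparseUnitBall {x : ι → ℝ} {T : Finset ι} (hT : #T ≤ s)
    (hx : ∀ i ∉ T, x i = 0) {t : ℝ} (ht : 0 ≤ t) (h : ∑ i ∈ T, x i ^ 2 ≤ t ^ 2) :
    x ∈ t • convexHull ℝ (sparseUnitBall ι s) := by
  have hsum : ∑ i ∈ T, x i ^ 2 = ∑ i, x i ^ 2 :=
    sum_subset (subset_univ T) fun i _ hi => by simp [hx i hi]
  rcases ht.eq_or_lt with rfl | ht
  · have hzero : x = 0 := by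
      have := (sum_eq_zero_iff_of_nonneg fun i _ => sq_nonneg (x i)).mp
        (le_antisymm (by simpa [hsum] using h) (sum_nonneg fun i _ => sq_nonneg (x i)))
      funext i
      exact pow_eq_zero_iff two_ne_zero |>.mp (this i (mem_univ i))
    subst hzero
    exact Set.zero_mem_smul_set (subset_convexHull ℝ _ zero_mem_sparseUnitBall)
  · rw [Set.mem_smul_set_iff_inv_smul_mem₀ ht.ne']
    refine subset_convexHull ℝ _ ⟨⟨T, hT, fun i hi => by simp [hx i hi]⟩, ?_⟩
    calc ∑ i, (t⁻¹ • x) i ^ 2 = (t ^ 2)⁻¹ * ∑ i, x i ^ 2 := by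
          simp only [Pi.smul_apply, smul_eq_mul, mul_pow, mul_sum, inv_pow]
      _ ≤ 1 := inv_mul_le_one_of_le₀ (hsum ▸ h) (sq_nonneg t)

theorem indicator_mem_smul_convexHull_sparseUnitBall (x : ι → ℝ) {T : Finset ι} (hT : #T ≤ s)
    {t : ℝ} (ht : 0 ≤ t) (h : ∑ i ∈ T, x i ^ 2 ≤ t ^ 2) :
    (T : Set ι).indicator x ∈ t • convexHull ℝ (sparseUnitBall ι s) :=
  mem_smul_convexHull_sparseUnitBall hT (fun i hi => by simp [hi]) ht
    ((sum_congr rfl fun i hi => by simp [hi]).trans_le h)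

theorem sum_add_sum_abs_indicator_compl (x : ι → ℝ) (T : Finset ι) :
    ∑ i ∈ T, |x i| + ∑ i, |(T : Set ι)ᶜ.indicator x i| = ∑ i, |x i| := by
  classical
  have htail : ∑ i, |(T : Set ι)ᶜ.indicator x i| = ∑ i ∈ Tᶜ, |x i| := by
    rw [← sum_add_sum_compl T, sum_eq_zero fun i hi => by simp [hi], zero_add]
    exact sum_congr rfl fun i hi => by simp [mem_compl.mp hi]
  rw [htail, sum_add_sum_compl]

theorem card_support_indicator_compl_lt {x : ι → ℝ} {T : Finset ι} (hT : ∃ i ∈ T, x i ≠ 0) :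
    #{i | (T : Set ι)ᶜ.indicator x i ≠ 0} < #{i | x i ≠ 0} := by
  obtain ⟨i, hiT, hi⟩ := hT
  refine card_lt_card ((ssubset_iff_of_subset fun j => ?_).mpr
    ⟨i, by simpa using hi, by simp [hiT]⟩)
  by_cases hj : j ∈ T <;> simp [hj]

-- The top `s` coordinates `x_T` have `ℓ₂`-norm at most `c / √s`; the rest has coordinates bounded
-- by `‖x_T‖₁ / s`, so its budget is `(‖x_T‖₁ + ‖x - x_T‖₁) / √s = ‖x‖₁ / √s`.
theorem mem_smul_convexHull_sparseUnitBall_of_mul_abs_le (hs : 1 ≤ s)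
    (hsι : s ≤ Fintype.card ι) {x : ι → ℝ} {c t : ℝ} (hc : ∀ i, s * |x i| ≤ c)
    (ht : (c + ∑ i, |x i|) / √s ≤ t) : x ∈ t • convexHull ℝ (sparseUnitBall ι s) := by
  induction hn : #{i | x i ≠ 0} using Nat.strong_induction_on generalizing x c t with
  | _ n ih =>
  by_cases hx : x = 0
  · subst hx
    exact Set.zero_mem_smul_set (subset_convexHull ℝ _ zero_mem_sparseUnitBall)
  obtain ⟨j, hj⟩ : ∃ j, x j ≠ 0 := Function.ne_iff.mp hx
  obtain ⟨T, hTcard, hTtop⟩ := exists_card_eq_forall_notMem_le (fun i => |x i|) hsι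
  have hmeet : ∃ i ∈ T, x i ≠ 0 := by
    by_cases hjT : j ∈ T
    · exact ⟨j, hjT, hj⟩
    obtain ⟨i, hi⟩ := card_pos.mp (hTcard ▸ hs : 0 < #T)
    exact ⟨i, hi, fun h => hj (abs_nonpos_iff.mp (by simpa [h] using hTtop i hi j hjT))⟩
  have hc0 : 0 ≤ c := (mul_nonneg (Nat.cast_nonneg s) (abs_nonneg (x j))).trans (hc j)
  have hl1 : 0 ≤ (∑ i, |x i|) / √s := by positivity
  have hbudget : c / √s ≤ t - (∑ i, |x i|) / √s := by rw [add_div] at ht; linarith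
  have hhead_nonneg : 0 ≤ t - (∑ i, |x i|) / √s :=
    (div_nonneg hc0 (Real.sqrt_nonneg _)).trans hbudget
  have hhead : (T : Set ι).indicator x ∈
      (t - (∑ i, |x i|) / √s) • convexHull ℝ (sparseUnitBall ι s) :=
    indicator_mem_smul_convexHull_sparseUnitBall x hTcard.le hhead_nonneg
      ((sum_sq_le_of_mul_abs_le hTcard.le hs fun i _ => hc i).trans
        (pow_le_pow_left₀ (by positivity) hbudget 2))
  have htail : (T : Set ι)ᶜ.indicator x ∈
      ((∑ i, |x i|) / √s) • convexHull ℝ (sparseUnitBall ι s) :=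
    ih _ (hn ▸ card_support_indicator_compl_lt hmeet)
      (mul_abs_indicator_compl_le_sum hTcard hTtop) (by rw [sum_add_sum_abs_indicator_compl]) rfl
  rw [← Set.indicator_self_add_compl (T : Set ι) x, ← sub_add_cancel t ((∑ i, |x i|) / √s),
    Convex.add_smul (convex_convexHull ℝ _) hhead_nonneg hl1]
  exact Set.add_mem_add hhead htail

end

theorem l1ball_l2ball_subset_convexHull_general {m : ℕ} (s : ℕ) (hs : 1 ≤ s) (hsm : s ≤ m)
    (ρ : ℝ) :
    {x : Fin m → ℝ | (∑ i, |x i|) ≤ Real.sqrt s ∧ Real.sqrt (∑ i, x i ^ 2) ≤ ρ} ⊆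
      (1 + ρ) • convexHull ℝ
        ({x : Fin m → ℝ | (∃ T : Finset (Fin m), T.card ≤ s ∧ ∀ i ∉ T, x i = 0)
          ∧ (∑ i, x i ^ 2) ≤ 1}) := by
  rintro x ⟨hx1, hx2⟩
  obtain ⟨hρ, hx2⟩ := Real.sqrt_le_iff.mp hx2
  obtain ⟨T, hTcard, hTtop⟩ := exists_card_eq_forall_notMem_le (fun i => |x i|)
    (by simpa using hsm)
  have hhead : (T : Set (Fin m)).indicator x ∈ ρ • convexHull ℝ (sparseUnitBall (Fin m) s) :=
    indicator_mem_smul_convexHull_sparseUnitBall x hTcard.le hρ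
      ((sum_le_sum_of_subset_of_nonneg (subset_univ T) fun i _ _ => sq_nonneg _).trans hx2)
  have htail : (T : Set (Fin m))ᶜ.indicator x ∈
      (1 : ℝ) • convexHull ℝ (sparseUnitBall (Fin m) s) := by
    refine mem_smul_convexHull_sparseUnitBall_of_mul_abs_le hs (by simpa using hsm)
      (mul_abs_indicator_compl_le_sum hTcard hTtop) ?_
    rw [sum_add_sum_abs_indicator_compl]
    exact div_le_one_of_le₀ hx1 (Real.sqrt_nonneg _)
  rw [← Set.indicator_self_add_compl (T : Set (Fin m)) x, add_comm 1 ρ,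
    Convex.add_smul (convex_convexHull ℝ _) hρ zero_le_one]
  exact Set.add_mem_add hhead htail

/-- √s B₁ᵐ ∩ ρ B₂ᵐ ⊆ (1+ρ) conv(U_s ∩ B₂ᵐ) for ρ ∈ (0,1]. -/
theorem l1ball_l2ball_subset_convexHull {m : ℕ} (s : ℕ) (hs : 1 ≤ s) (hsm : s ≤ m)
    (ρ : ℝ) (hρ0 : 0 < ρ) (hρ1 : ρ ≤ 1) :
    {x : Fin m → ℝ | (∑ i, |x i|) ≤ Real.sqrt s ∧ Real.sqrt (∑ i, x i ^ 2) ≤ ρ} ⊆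
      (1 + ρ) • convexHull ℝ
        ({x : Fin m → ℝ | (∃ T : Finset (Fin m), T.card ≤ s ∧ ∀ i ∉ T, x i = 0)
          ∧ (∑ i, x i ^ 2) ≤ 1}) :=
  l1ball_l2ball_subset_convexHull_general s hs hsm ρ
end

section
/- Let $0 < \delta$, $0 < s < m/2$, and let $\Delta$ be an $m \times m$ real matrix such that $|u^T \Delta v| \le \delta$ for all unit vectors $u, v$ each supported on at most $s$ coordinates. Then for every $v \in \sqrt{s}\,B_1^m \cap B_2^m$ (i.e., $\|v\|_1 \le \sqrt{s}$ and $\|v\|_2 \le 1$), we have $|v^T \Delta v| \le 4\delta$. -/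
open Finset Matrix

/-!
Sort the coordinates of `v` by decreasing absolute value and cut them into consecutive blocks
`u₀, u₁, …` of `s` coordinates each. Every entry of `u_{k+1}` is at most the average absolute
entry of the full block `u_k`, so `‖u_{k+1}‖₂ ≤ ‖u_k‖₁ / √s`; hence
`∑ ‖u_k‖₂ ≤ ‖v‖₂ + ‖v‖₁ / √s ≤ 2`. Expanding `vᵀΔv = ∑_{j,k} u_jᵀ Δ u_k` and using
`|u_jᵀ Δ u_k| ≤ δ ‖u_j‖₂ ‖u_k‖₂` for the `s`-sparse blocks gives `|vᵀΔv| ≤ δ (∑ ‖u_k‖₂)² ≤ 4δ`.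
-/

def IsSparse {ι M : Type*} [Zero M] (s : ℕ) (x : ι → M) : Prop :=
  ∃ T : Finset ι, T.card ≤ s ∧ ∀ i ∉ T, x i = 0

lemma IsSparse.smul {ι R M : Type*} [Zero M] [SMulZeroClass R M] {s : ℕ} {x : ι → M}
    (hx : IsSparse s x) (c : R) : IsSparse s (c • x) := by
  obtain ⟨T, hT, hx⟩ := hx
  exact ⟨T, hT, fun i hi => by simp [hx i hi]⟩

section Bilinear

variable {ι : Type*} [Fintype ι]

lemma eq_zero_of_sqrt_sum_sq_eq_zero {x : ι → ℝ} (h : √(∑ i, x i ^ 2) = 0) : x = 0 := by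
  rw [Real.sqrt_eq_zero (sum_nonneg fun i _ => sq_nonneg _),
    sum_eq_zero_iff_of_nonneg fun i _ => sq_nonneg _] at h
  funext i
  simpa using h i (mem_univ i)

lemma sum_sq_inv_sqrt_sum_sq_smul {x : ι → ℝ} (hx : 0 < √(∑ i, x i ^ 2)) :
    ∑ i, ((√(∑ j, x j ^ 2))⁻¹ • x) i ^ 2 = 1 := by
  have hsq := Real.sq_sqrt (sum_nonneg fun i (_ : i ∈ univ) => sq_nonneg (x i))
  simp only [Pi.smul_apply, smul_eq_mul, mul_pow, ← mul_sum, inv_pow, hsq]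
  exact inv_mul_cancel₀ (by rw [← hsq]; positivity)

lemma dotProduct_mulVec_smul_smul (Δ : Matrix ι ι ℝ) (a b : ℝ) (x y : ι → ℝ) :
    (a • x) ⬝ᵥ Δ *ᵥ (b • y) = a * b * (x ⬝ᵥ Δ *ᵥ y) := by
  rw [mulVec_smul, smul_dotProduct, dotProduct_smul, smul_eq_mul, smul_eq_mul, mul_assoc]

lemma abs_dotProduct_mulVec_le_of_isSparse {s : ℕ} {δ : ℝ} {Δ : Matrix ι ι ℝ}
    (hΔ : ∀ u v : ι → ℝ, ∑ i, u i ^ 2 = 1 → ∑ i, v i ^ 2 = 1 → IsSparse s u → IsSparse s v →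
      |u ⬝ᵥ Δ *ᵥ v| ≤ δ)
    {x y : ι → ℝ} (hx : IsSparse s x) (hy : IsSparse s y) :
    |x ⬝ᵥ Δ *ᵥ y| ≤ δ * (√(∑ i, x i ^ 2) * √(∑ i, y i ^ 2)) := by
  rcases (Real.sqrt_nonneg (∑ i, x i ^ 2)).eq_or_lt with hnx | hnx
  · simp [eq_zero_of_sqrt_sum_sq_eq_zero hnx.symm]
  rcases (Real.sqrt_nonneg (∑ i, y i ^ 2)).eq_or_lt with hny | hny
  · simp [eq_zero_of_sqrt_sum_sq_eq_zero hny.symm]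
  set nx := √(∑ i, x i ^ 2)
  set ny := √(∑ i, y i ^ 2)
  have hunit := hΔ _ _ (sum_sq_inv_sqrt_sum_sq_smul hnx) (sum_sq_inv_sqrt_sum_sq_smul hny)
    (hx.smul nx⁻¹) (hy.smul ny⁻¹)
  rw [dotProduct_mulVec_smul_smul, abs_mul, abs_of_pos (by positivity),
    ← le_div_iff₀' (by positivity)] at hunit
  calc |x ⬝ᵥ Δ *ᵥ y| ≤ δ / (nx⁻¹ * ny⁻¹) := hunit
    _ = δ * (nx * ny) := by field_simp

lemma abs_dotProduct_mulVec_sum_le {κ : Type*} (t : Finset κ) (Δ : Matrix ι ι ℝ) (δ : ℝ)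
    (u : κ → ι → ℝ) (a : κ → ℝ) (h : ∀ j k, |u j ⬝ᵥ Δ *ᵥ u k| ≤ δ * (a j * a k)) :
    |(∑ k ∈ t, u k) ⬝ᵥ Δ *ᵥ (∑ k ∈ t, u k)| ≤ δ * (∑ k ∈ t, a k) ^ 2 := by
  rw [mulVec_sum, sum_dotProduct]
  simp_rw [dotProduct_sum]
  calc |∑ j ∈ t, ∑ k ∈ t, u j ⬝ᵥ Δ *ᵥ u k| ≤ ∑ j ∈ t, ∑ k ∈ t, |u j ⬝ᵥ Δ *ᵥ u k| :=
        (abs_sum_le_sum_abs _ _).trans (sum_le_sum fun j _ => abs_sum_le_sum_abs _ _)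
    _ ≤ ∑ j ∈ t, ∑ k ∈ t, δ * (a j * a k) := sum_le_sum fun j _ => sum_le_sum fun k _ => h j k
    _ = δ * (∑ k ∈ t, a k) ^ 2 := by
        rw [sq, sum_mul_sum, mul_sum]
        simp_rw [mul_sum]

end Bilinear

lemma sum_sq_le_sq_sum_abs_div {ι : Type*} {B A : Finset ι} {f : ι → ℝ} {s : ℕ} (hB : #B ≤ s)
    (hA : s ≤ #A) (h : ∀ i ∈ B, ∀ j ∈ A, |f i| ≤ |f j|) :
    ∑ i ∈ B, f i ^ 2 ≤ (∑ j ∈ A, |f j|) ^ 2 / s := by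
  rcases Nat.eq_zero_or_pos s with rfl | hs
  · simp [card_eq_zero.1 (Nat.le_zero.1 hB)]
  set L := ∑ j ∈ A, |f j|
  have hs' : (0 : ℝ) < s := by exact_mod_cast hs
  have hbound : ∀ i ∈ B, |f i| ≤ L / s := by
    intro i hi
    rw [le_div_iff₀ hs']
    calc |f i| * s ≤ |f i| * #A := by gcongr
      _ = ∑ j ∈ A, |f i| := by rw [sum_const, nsmul_eq_mul, mul_comm]
      _ ≤ L := sum_le_sum (h i hi)
  calc ∑ i ∈ B, f i ^ 2 ≤ ∑ i ∈ B, (L / s) ^ 2 := sum_le_sum fun i hi => by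
        rw [← sq_abs]
        exact pow_le_pow_left₀ (abs_nonneg _) (hbound i hi) 2
    _ = #B * (L / s) ^ 2 := by rw [sum_const, nsmul_eq_mul]
    _ ≤ s * (L / s) ^ 2 := by gcongr
    _ = L ^ 2 / s := by field_simp

section LevelParts

variable {ι : Type*} (g : ι → ℕ) (v : ι → ℝ)

def levelPart (k : ℕ) : ι → ℝ := fun i => if g i = k then v i else 0

lemma sum_range_levelPart {N : ℕ} (hN : ∀ i, g i < N) : ∑ k ∈ range N, levelPart g v k = v := by
  funext i
  simp [levelPart, hN i]

variable [Fintype ι]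

lemma sum_comp_levelPart {f : ℝ → ℝ} (hf : f 0 = 0) (k : ℕ) :
    ∑ i, f (levelPart g v k i) = ∑ i with g i = k, f (v i) := by
  rw [sum_filter]
  refine sum_congr rfl fun i _ => ?_
  unfold levelPart
  split_ifs <;> simp [hf]

lemma isSparse_levelPart {s k : ℕ} (h : #{i | g i = k} ≤ s) : IsSparse s (levelPart g v k) :=
  ⟨_, h, fun i hi => by simp_all [levelPart]⟩

lemma sum_range_sum_abs_levelPart {N : ℕ} (hN : ∀ i, g i < N) :
    ∑ k ∈ range N, ∑ i, |levelPart g v k i| = ∑ i, |v i| := by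
  simp_rw [sum_comp_levelPart g v abs_zero]
  exact sum_fiberwise_of_maps_to (fun i _ => mem_range.2 (hN i)) _

lemma sum_sq_levelPart_le (k : ℕ) : ∑ i, levelPart g v k i ^ 2 ≤ ∑ i, v i ^ 2 := by
  rw [sum_comp_levelPart g v (f := (· ^ 2)) (zero_pow two_ne_zero)]
  exact sum_le_sum_of_subset_of_nonneg (filter_subset _ _) fun i _ _ => sq_nonneg _

variable {g v}

lemma sqrt_sum_sq_levelPart_succ_le {s k : ℕ} (hcard : #{i | g i = k + 1} ≤ s)
    (hfull : (∃ i, g i = k + 1) → s ≤ #{i | g i = k})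
    (hanti : ∀ i j, g i < g j → |v j| ≤ |v i|) :
    √(∑ i, levelPart g v (k + 1) i ^ 2) ≤ (∑ i, |levelPart g v k i|) / √s := by
  have hL : 0 ≤ ∑ i, |levelPart g v k i| := sum_nonneg fun i _ => abs_nonneg _
  rw [← Real.sqrt_sq hL, ← Real.sqrt_div' _ (Nat.cast_nonneg s)]
  refine Real.sqrt_le_sqrt ?_
  rw [sum_comp_levelPart g v (f := (· ^ 2)) (zero_pow two_ne_zero), sum_comp_levelPart g v abs_zero]
  by_cases hne : ∃ i, g i = k + 1
  · exact sum_sq_le_sq_sum_abs_div hcard (hfull hne) fun i hi j hj => hanti j i (by simp_all)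
  · rw [not_exists] at hne
    simp only [hne, filter_false, sum_empty]
    positivity

lemma sum_sqrt_sum_sq_levelPart_le {s N : ℕ} (hN : ∀ i, g i < N)
    (hcard : ∀ k, #{i | g i = k} ≤ s) (hfull : ∀ k, (∃ i, g i = k + 1) → s ≤ #{i | g i = k})
    (hanti : ∀ i j, g i < g j → |v j| ≤ |v i|) :
    ∑ k ∈ range N, √(∑ i, levelPart g v k i ^ 2) ≤ √(∑ i, v i ^ 2) + (∑ i, |v i|) / √s := by
  calc ∑ k ∈ range N, √(∑ i, levelPart g v k i ^ 2)
      ≤ ∑ k ∈ range (N + 1), √(∑ i, levelPart g v k i ^ 2) :=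
        sum_le_sum_of_subset_of_nonneg (range_subset_range.2 N.le_succ) fun _ _ _ =>
          Real.sqrt_nonneg _
    _ = ∑ k ∈ range N, √(∑ i, levelPart g v (k + 1) i ^ 2) + √(∑ i, levelPart g v 0 i ^ 2) :=
        sum_range_succ' _ _
    _ ≤ ∑ k ∈ range N, (∑ i, |levelPart g v k i|) / √s + √(∑ i, v i ^ 2) :=
        add_le_add (sum_le_sum fun k _ => sqrt_sum_sq_levelPart_succ_le (hcard _) (hfull k) hanti)
          (Real.sqrt_le_sqrt (sum_sq_levelPart_le g v 0))
    _ = √(∑ i, v i ^ 2) + (∑ i, |v i|) / √s := by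
        rw [← sum_div, sum_range_sum_abs_levelPart g v hN, add_comm]

end LevelParts

lemma card_filter_div_eq {m s : ℕ} (hs : 0 < s) (k : ℕ) :
    #{j : Fin m | (j : ℕ) / s = k} = min (k * s + s) m - k * s := by
  have hIco : (Iio m).filter (· / s = k) = Ico (k * s) (min (k * s + s) m) := by
    ext j
    simp only [mem_filter, mem_Iio, mem_Ico, Nat.div_eq_iff hs]
    omega
  rw [← Nat.card_Ico, ← hIco, ← Fin.map_valEmbedding_univ, filter_map, card_map]
  rfl

theorem exists_sparse_decomposition {m s : ℕ} (hs : 0 < s) (v : Fin m → ℝ) :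
    ∃ (N : ℕ) (u : ℕ → Fin m → ℝ), (∀ k, IsSparse s (u k)) ∧ ∑ k ∈ range N, u k = v ∧
      ∑ k ∈ range N, √(∑ i, u k i ^ 2) ≤ √(∑ i, v i ^ 2) + (∑ i, |v i|) / √s := by
  set σ := Tuple.sort fun i => -|v i|
  set g : Fin m → ℕ := fun i => (σ.symm i : ℕ) / s
  have hcard (k : ℕ) : #{i | g i = k} = min (k * s + s) m - k * s := by
    rw [← card_filter_div_eq hs k]
    exact card_equiv σ.symm (by simp [g])
  have hN (i : Fin m) : g i < m := (Nat.div_le_self _ _).trans_lt (σ.symm i).2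
  have hfull (k : ℕ) : (∃ i, g i = k + 1) → s ≤ #{i | g i = k} := by
    rintro ⟨i, hi⟩
    have hi_block := (Nat.div_eq_iff hs).1 hi
    have hi_lt := (σ.symm i).2
    rw [hcard]
    grind
  have hanti (i j : Fin m) (hij : g i < g j) : |v j| ≤ |v i| := by
    have hle : σ.symm i ≤ σ.symm j :=
      le_of_not_gt fun h => hij.not_ge (Nat.div_le_div_right h.le)
    simpa [σ] using Tuple.monotone_sort (fun i => -|v i|) hle
  exact ⟨m, levelPart g v, fun k => isSparse_levelPart g v ((hcard k).trans_le (by omega)),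
    sum_range_levelPart g v hN,
    sum_sqrt_sum_sq_levelPart_le hN (fun k => (hcard k).trans_le (by omega)) hfull hanti⟩

theorem quadratic_form_bound_on_l1l2_ball_general {m : ℕ} (s : ℕ) (hs : 0 < s)
    (δ : ℝ) (hδ : 0 < δ) (Δ : Matrix (Fin m) (Fin m) ℝ)
    (hΔ : ∀ u v : Fin m → ℝ,
      (∑ i, u i ^ 2) = 1 → (∑ i, v i ^ 2) = 1 →
      (∃ T : Finset (Fin m), T.card ≤ s ∧ ∀ i ∉ T, u i = 0) →
      (∃ T : Finset (Fin m), T.card ≤ s ∧ ∀ i ∉ T, v i = 0) →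
      |u ⬝ᵥ Δ.mulVec v| ≤ δ) :
    ∀ v : Fin m → ℝ, (∑ i, |v i|) ≤ Real.sqrt s → (∑ i, v i ^ 2) ≤ 1 →
      |v ⬝ᵥ Δ.mulVec v| ≤ 4 * δ := by
  intro v hv₁ hv₂
  obtain ⟨N, u, hu, rfl, hnorm⟩ := exists_sparse_decomposition hs v
  have hmass : ∑ k ∈ range N, √(∑ i, u k i ^ 2) ≤ 2 := by
    have hs' : 0 < √(s : ℝ) := Real.sqrt_pos.2 (by exact_mod_cast hs)
    calc _ ≤ _ := hnorm
      _ ≤ 1 + 1 := add_le_add (Real.sqrt_le_one.2 hv₂) ((div_le_one hs').2 hv₁)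
      _ = 2 := one_add_one_eq_two
  calc _ ≤ δ * (∑ k ∈ range N, √(∑ i, u k i ^ 2)) ^ 2 :=
        abs_dotProduct_mulVec_sum_le _ Δ δ u _ fun j k =>
          abs_dotProduct_mulVec_le_of_isSparse hΔ (hu j) (hu k)
    _ ≤ δ * 2 ^ 2 := by gcongr
    _ = 4 * δ := by ring

/-- If |uᵀΔv| ≤ δ for all s-sparse unit vectors u, v, then |vᵀΔv| ≤ 4δ for all
v with ‖v‖₁ ≤ √s and ‖v‖₂ ≤ 1. -/
theorem quadratic_form_bound_on_l1l2_ball {m : ℕ} (s : ℕ) (hs : 0 < s)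
    (hsm : (s : ℝ) < m / 2) (δ : ℝ) (hδ : 0 < δ) (Δ : Matrix (Fin m) (Fin m) ℝ)
    (hΔ : ∀ u v : Fin m → ℝ,
      (∑ i, u i ^ 2) = 1 → (∑ i, v i ^ 2) = 1 →
      (∃ T : Finset (Fin m), T.card ≤ s ∧ ∀ i ∉ T, u i = 0) →
      (∃ T : Finset (Fin m), T.card ≤ s ∧ ∀ i ∉ T, v i = 0) →
      |u ⬝ᵥ Δ.mulVec v| ≤ δ) :
    ∀ v : Fin m → ℝ, (∑ i, |v i|) ≤ Real.sqrt s → (∑ i, v i ^ 2) ≤ 1 →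
      |v ⬝ᵥ Δ.mulVec v| ≤ 4 * δ :=
  quadratic_form_bound_on_l1l2_ball_general s hs δ hδ Δ hΔ
end

section
/- (Deterministic error bound for the corrected Lasso.) Let $\hat\Gamma$ be a symmetric $m \times m$ matrix satisfying the Lower-RE condition with curvature $\alpha > 0$ and tolerance $\tau > 0$: $\theta^T \hat\Gamma \theta \ge \alpha\|\theta\|_2^2 - \tau\|\theta\|_1^2$ for all $\theta$. Let $\hat\gamma \in \mathbb{R}^m$, $b_0 > 0$, $d \ge 1$, and $\lambda > 0$ satisfy $\sqrt{d}\,\tau \le \min\{\alpha/(32\sqrt{d}),\ \lambda/(4 b_0)\}$. Let $\beta^*$ be any $d$-sparse vector with $\|\beta^*\|_2 \le b_0$ and $\|\hat\gamma - \hat\Gamma\beta^*\|_\infty \le \lambda/2$, and let $\hat\beta$ minimize $\frac{1}{2}\beta^T\hat\Gamma\beta - \langle\hat\gamma,\beta\rangle + \lambda\|\beta\|_1$ over $\{\beta : \|\beta\|_1 \le b_0\sqrt{d}\}$. Then $\|\hat\beta - \beta^*\|_2 \le \frac{20}{\alpha}\lambda\sqrt{d}$ and $\|\hat\beta - \beta^*\|_1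 \le \frac{80}{\alpha}\lambda d$. -/
/-!
Write `ν = β̂ - β*` and split its ℓ₁ mass over the support `S` of `β*` as `a + b`. Comparing the
objective at `β̂` and at the feasible `β*` gives `½ νᵀΓ̂ν ≤ ⟨γ̂ - Γ̂β*, ν⟩ + λ(‖β*‖₁ - ‖β̂‖₁)`; the
oracle bound controls the first term by `λ(a + b)/2` and the sparsity of `β*` the second by
`λ(a - b)`. Feasibility of both vectors gives `‖ν‖₁ ≤ 2 b₀ √d`, so the tolerance term of the
Lower-RE condition costs at most `λ(a + b)/2`, and altogether `α‖ν‖₂² ≤ (7/2)λa - (1/2)λb`.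
Since `a ≤ √d ‖ν‖₂` by Cauchy–Schwarz, this is a scalar inequality yielding both bounds.
-/

open Finset Matrix

noncomputable section

variable {ι : Type*} [Fintype ι]

def lassoObjective (Γ : Matrix ι ι ℝ) (γ : ι → ℝ) (lam : ℝ) (β : ι → ℝ) : ℝ :=
  1 / 2 * (β ⬝ᵥ Γ *ᵥ β) - γ ⬝ᵥ β + lam * ∑ i, |β i|

theorem sum_abs_le_sqrt_mul_sqrt_sum_sq {S : Finset ι} {d : ℕ} (hS : #S ≤ d) (f : ι → ℝ) :
    ∑ i ∈ S, |f i| ≤ √d * √(∑ i, f i ^ 2) := by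
  have hCS : (∑ i ∈ S, |f i|) ^ 2 ≤ #S * ∑ i ∈ S, f i ^ 2 := by
    simpa only [sq_abs] using sq_sum_le_card_mul_sum_sq (s := S) (f := fun i => |f i|)
  calc ∑ i ∈ S, |f i| ≤ √(#S * ∑ i ∈ S, f i ^ 2) := Real.le_sqrt_of_sq_le hCS
    _ ≤ √(d * ∑ i, f i ^ 2) := by
      refine Real.sqrt_le_sqrt (mul_le_mul (by exact_mod_cast hS) ?_
        (sum_nonneg fun i _ => sq_nonneg _) (Nat.cast_nonneg d))
      exact sum_le_sum_of_subset_of_nonneg (subset_univ S) fun i _ _ => sq_nonneg _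
    _ = √d * √(∑ i, f i ^ 2) := Real.sqrt_mul (Nat.cast_nonneg d) _

theorem sum_abs_le_mul_sqrt_of_sparse {S : Finset ι} {d : ℕ} (hS : #S ≤ d) {β : ι → ℝ}
    (hβ : ∀ i ∉ S, β i = 0) {R : ℝ} (hR : √(∑ i, β i ^ 2) ≤ R) :
    ∑ i, |β i| ≤ R * √d := by
  rw [← sum_subset (subset_univ S) fun i _ hi => by rw [hβ i hi, abs_zero], mul_comm]
  exact (sum_abs_le_sqrt_mul_sqrt_sum_sq hS β).trans (by gcongr)

theorem sum_abs_sub_sum_abs_le_of_forall_notMem_eq_zero [DecidableEq ι] {S : Finset ι} {y : ι → ℝ}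
    (hy : ∀ i ∉ S, y i = 0) (x : ι → ℝ) :
    ∑ i, |y i| - ∑ i, |x i| ≤ ∑ i ∈ S, |x i - y i| - ∑ i ∈ Sᶜ, |x i - y i| := by
  rw [← sum_add_sum_compl S (fun i => |y i|), ← sum_add_sum_compl S (fun i => |x i|)]
  have hon : ∑ i ∈ S, |y i| - ∑ i ∈ S, |x i| ≤ ∑ i ∈ S, |x i - y i| := by
    rw [← sum_sub_distrib]
    exact sum_le_sum fun i _ => abs_sub_comm (x i) (y i) ▸ abs_sub_abs_le_abs_sub _ _
  have hzero : ∑ i ∈ Sᶜ, |y i| = 0 :=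
    sum_eq_zero fun i hi => by rw [hy i (mem_compl.mp hi), abs_zero]
  have hoff : ∑ i ∈ Sᶜ, |x i - y i| = ∑ i ∈ Sᶜ, |x i| :=
    sum_congr rfl fun i hi => by rw [hy i (mem_compl.mp hi), sub_zero]
  linarith

theorem dotProduct_le_mul_sum_abs {g : ι → ℝ} {c : ℝ} (hg : ∀ i, |g i| ≤ c) (v : ι → ℝ) :
    g ⬝ᵥ v ≤ c * ∑ i, |v i| := by
  rw [mul_sum]
  refine sum_le_sum fun i _ => ?_
  calc g i * v i ≤ |g i| * |v i| := (le_abs_self _).trans (abs_mul _ _).le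
    _ ≤ c * |v i| := by gcongr; exact hg i

theorem Matrix.IsSymm.dotProduct_mulVec_comm {R : Type*} [CommSemiring R] {Γ : Matrix ι ι R}
    (hΓ : Γ.IsSymm) (x y : ι → R) :
    x ⬝ᵥ Γ *ᵥ y = y ⬝ᵥ Γ *ᵥ x := by
  rw [dotProduct_mulVec, ← vecMul_transpose, hΓ.eq, dotProduct_comm]

theorem half_quadForm_sub_le_of_lassoObjective_le {Γ : Matrix ι ι ℝ} (hΓ : Γ.IsSymm)
    {γ : ι → ℝ} {lam : ℝ} {β₀ β₁ : ι → ℝ}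
    (h : lassoObjective Γ γ lam β₁ ≤ lassoObjective Γ γ lam β₀) :
    1 / 2 * ((β₁ - β₀) ⬝ᵥ Γ *ᵥ (β₁ - β₀)) ≤
      (γ - Γ *ᵥ β₀) ⬝ᵥ (β₁ - β₀) + lam * (∑ i, |β₀ i| - ∑ i, |β₁ i|) := by
  unfold lassoObjective at h
  simp only [mulVec_sub, sub_dotProduct, dotProduct_sub]
  rw [hΓ.dotProduct_mulVec_comm β₀ β₁, dotProduct_comm (Γ *ᵥ β₀) β₁,
    dotProduct_comm (Γ *ᵥ β₀) β₀]
  linarith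

theorem sum_abs_sub_le_of_sum_abs_le {x y : ι → ℝ} {R : ℝ} (hx : ∑ i, |x i| ≤ R)
    (hy : ∑ i, |y i| ≤ R) : ∑ i, |x i - y i| ≤ 2 * R := by
  calc ∑ i, |x i - y i| ≤ ∑ i, (|x i| + |y i|) := sum_le_sum fun i _ => abs_sub _ _
    _ ≤ 2 * R := by rw [sum_add_distrib]; linarith

theorem lasso_cone_inequality [DecidableEq ι] {Γ : Matrix ι ι ℝ} (hΓ : Γ.IsSymm) {γ : ι → ℝ}
    {α τ lam : ℝ} (hlam : 0 ≤ lam) {S : Finset ι} {β₀ β₁ : ι → ℝ} (hβ₀ : ∀ i ∉ S, β₀ i = 0)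
    (hopt : lassoObjective Γ γ lam β₁ ≤ lassoObjective Γ γ lam β₀)
    (horacle : ∀ i, |γ i - (Γ *ᵥ β₀) i| ≤ lam / 2)
    (hLRE : (β₁ - β₀) ⬝ᵥ Γ *ᵥ (β₁ - β₀) ≥
      α * ∑ i, (β₁ i - β₀ i) ^ 2 - τ * (∑ i, |β₁ i - β₀ i|) ^ 2)
    (htol : τ * ∑ i, |β₁ i - β₀ i| ≤ lam / 2) :
    α * ∑ i, (β₁ i - β₀ i) ^ 2 ≤
      7 / 2 * lam * ∑ i ∈ S, |β₁ i - β₀ i| - 1 / 2 * lam * ∑ i ∈ Sᶜ, |β₁ i - β₀ i| := by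
  have hbasic := half_quadForm_sub_le_of_lassoObjective_le hΓ hopt
  have hnoise : (γ - Γ *ᵥ β₀) ⬝ᵥ (β₁ - β₀) ≤ lam / 2 * ∑ i, |β₁ i - β₀ i| :=
    dotProduct_le_mul_sum_abs horacle _
  have hpenalty := mul_le_mul_of_nonneg_left
    (sum_abs_sub_sum_abs_le_of_forall_notMem_eq_zero hβ₀ β₁) hlam
  have htolerance : τ * (∑ i, |β₁ i - β₀ i|) ^ 2 ≤ lam / 2 * ∑ i, |β₁ i - β₀ i| := by
    rw [sq, ← mul_assoc]
    exact mul_le_mul_of_nonneg_right htol (sum_nonneg fun i _ => abs_nonneg _)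
  rw [← sum_add_sum_compl S fun i => |β₁ i - β₀ i|] at hnoise htolerance hLRE
  linarith

theorem error_bounds_of_cone_inequality {α lam s N a b : ℝ} (hα : 0 < α) (hlam : 0 < lam)
    (hs : 0 ≤ s) (hN : 0 ≤ N) (hb : 0 ≤ b) (hcone : α * N ^ 2 ≤ 7 / 2 * lam * a - 1 / 2 * lam * b)
    (ha : a ≤ s * N) :
    N ≤ 20 / α * lam * s ∧ a + b ≤ 80 / α * lam * s ^ 2 := by
  have hαN : α * N ≤ 7 / 2 * lam * s := by
    rcases hN.eq_or_lt with rfl | hNpos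
    · rw [mul_zero]; positivity
    · refine le_of_mul_le_mul_right ?_ hNpos
      nlinarith [mul_le_mul_of_nonneg_left ha hlam.le]
  have hba : b ≤ 7 * a := by nlinarith [mul_nonneg hα.le (sq_nonneg N)]
  have hαa : α * a ≤ 7 / 2 * lam * s ^ 2 := by nlinarith [mul_le_mul_of_nonneg_left ha hα.le]
  constructor
  · rw [div_mul_eq_mul_div, div_mul_eq_mul_div, le_div_iff₀ hα]
    nlinarith [mul_nonneg hlam.le hs]
  · rw [div_mul_eq_mul_div, div_mul_eq_mul_div, le_div_iff₀ hα]
    nlinarith [mul_nonneg hlam.le (sq_nonneg s)]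

end

theorem corrected_lasso_error_bound_general {m : ℕ} (Ghat : Matrix (Fin m) (Fin m) ℝ)
    (hGhat : Ghat.IsSymm) (γhat : Fin m → ℝ)
    (α τ lam b₀ : ℝ) (hα : 0 < α) (hτ : 0 < τ) (hlam : 0 < lam) (hb₀ : 0 < b₀)
    (d : ℕ)
    (hLRE : ∀ θ : Fin m → ℝ,
      θ ⬝ᵥ Ghat.mulVec θ ≥ α * (∑ i, θ i ^ 2) - τ * (∑ i, |θ i|) ^ 2)
    (hτd : Real.sqrt d * τ ≤ min (α / (32 * Real.sqrt d)) (lam / (4 * b₀)))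
    (βstar : Fin m → ℝ)
    (hsparse : ∃ S : Finset (Fin m), S.card ≤ d ∧ ∀ i ∉ S, βstar i = 0)
    (hβstar2 : Real.sqrt (∑ i, (βstar i) ^ 2) ≤ b₀)
    (horacle : ∀ i, |γhat i - Ghat.mulVec βstar i| ≤ lam / 2)
    (βhat : Fin m → ℝ) (hβhatfeas : (∑ i, |βhat i|) ≤ b₀ * Real.sqrt d)
    (hβhatopt : ∀ β : Fin m → ℝ, (∑ i, |β i|) ≤ b₀ * Real.sqrt d →
      (1 / 2) * (βhat ⬝ᵥ Ghat.mulVec βhat) - γhat ⬝ᵥ βhat + lam * (∑ i, |βhat i|) ≤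
      (1 / 2) * (β ⬝ᵥ Ghat.mulVec β) - γhat ⬝ᵥ β + lam * (∑ i, |β i|)) :
    Real.sqrt (∑ i, (βhat i - βstar i) ^ 2) ≤ 20 / α * lam * Real.sqrt d ∧
    (∑ i, |βhat i - βstar i|) ≤ 80 / α * lam * d := by
  obtain ⟨S, hScard, hS0⟩ := hsparse
  have hβstarfeas := sum_abs_le_mul_sqrt_of_sparse hScard hS0 hβstar2
  have htol : τ * ∑ i, |βhat i - βstar i| ≤ lam / 2 := by
    have hτb₀ : 4 * b₀ * (Real.sqrt d * τ) ≤ lam := by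
      rw [mul_comm, ← le_div_iff₀ (by positivity)]; exact hτd.trans (min_le_right _ _)
    nlinarith [sum_abs_sub_le_of_sum_abs_le hβhatfeas hβstarfeas]
  have hLREν := hLRE (βhat - βstar)
  simp only [Pi.sub_apply] at hLREν
  have hcone := lasso_cone_inequality hGhat hlam.le hS0 (hβhatopt βstar hβstarfeas) horacle
    hLREν htol
  rw [← Real.sq_sqrt (sum_nonneg fun i _ => sq_nonneg (βhat i - βstar i))] at hcone
  have hbounds := error_bounds_of_cone_inequality hα hlam (Real.sqrt_nonneg d) (Real.sqrt_nonneg _)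
    (sum_nonneg fun i _ => abs_nonneg _) hcone
    (sum_abs_le_sqrt_mul_sqrt_sum_sq hScard fun i => βhat i - βstar i)
  rwa [sum_add_sum_compl, Real.sq_sqrt (Nat.cast_nonneg d)] at hbounds

/-- Deterministic error bound for the corrected Lasso: under the Lower-RE
condition, the sparsity/tolerance condition √d τ ≤ min{α/(32√d), λ/(4b₀)},
and ‖γ̂ - Γ̂β*‖_∞ ≤ λ/2, the constrained ℓ₁-penalized minimizer β̂ satisfies
‖β̂ - β*‖₂ ≤ (20/α) λ √d and ‖β̂ - β*‖₁ ≤ (80/α) λ d. -/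
theorem corrected_lasso_error_bound {m : ℕ} (Ghat : Matrix (Fin m) (Fin m) ℝ)
    (hGhat : Ghat.IsSymm) (γhat : Fin m → ℝ)
    (α τ lam b₀ : ℝ) (hα : 0 < α) (hτ : 0 < τ) (hlam : 0 < lam) (hb₀ : 0 < b₀)
    (d : ℕ) (hd : 1 ≤ d)
    (hLRE : ∀ θ : Fin m → ℝ,
      θ ⬝ᵥ Ghat.mulVec θ ≥ α * (∑ i, θ i ^ 2) - τ * (∑ i, |θ i|) ^ 2)
    (hτd : Real.sqrt d * τ ≤ min (α / (32 * Real.sqrt d)) (lam / (4 * b₀)))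
    (βstar : Fin m → ℝ)
    (hsparse : ∃ S : Finset (Fin m), S.card ≤ d ∧ ∀ i ∉ S, βstar i = 0)
    (hβstar2 : Real.sqrt (∑ i, (βstar i) ^ 2) ≤ b₀)
    (horacle : ∀ i, |γhat i - Ghat.mulVec βstar i| ≤ lam / 2)
    (βhat : Fin m → ℝ) (hβhatfeas : (∑ i, |βhat i|) ≤ b₀ * Real.sqrt d)
    (hβhatopt : ∀ β : Fin m → ℝ, (∑ i, |β i|) ≤ b₀ * Real.sqrt d →
      (1 / 2) * (βhat ⬝ᵥ Ghat.mulVec βhat) - γhat ⬝ᵥ βhat + lam * (∑ i, |βhat i|) ≤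
      (1 / 2) * (β ⬝ᵥ Ghat.mulVec β) - γhat ⬝ᵥ β + lam * (∑ i, |β i|)) :
    Real.sqrt (∑ i, (βhat i - βstar i) ^ 2) ≤ 20 / α * lam * Real.sqrt d ∧
    (∑ i, |βhat i - βstar i|) ≤ 80 / α * lam * d :=
  corrected_lasso_error_bound_general Ghat hGhat γhat α τ lam b₀ hα hτ hlam hb₀ d hLRE hτd βstar
    hsparse hβstar2 horacle βhat hβhatfeas hβhatopt
end

section
/- (RE on sparse cone from Lower-RE.) Let $\hat\Gamma$ be a symmetric $m \times m$ matrix satisfying the Lower-RE condition with curvature $\alpha > 0$ and tolerance $\tau > 0$. Let $k_0 > 0$ and $d_0 \ge 1$ satisfy $2\tau(1+3k_0)^2 d_0 \le \alpha/2$. Then for every $x \in \mathbb{R}^m$ such that there exists $I$ with $|I| = 2d_0$ and $\|x_{I^c}\|_1 \le 3k_0\|x_I\|_1$, letting $T_0$ be the indices of the $2d_0$ largest coordinates of $x$ in absolute value, we have $x^T \hat\Gamma x \ge \frac{\alpha}{2}\|x_{T_0}\|_2^2$. -/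
/-!
The cone condition together with the fact that `T₀` carries the largest coordinates gives
`‖x‖₁ ≤ (1 + 3k₀) ‖x_{T₀}‖₁`, and Cauchy–Schwarz on `T₀` turns this into
`‖x‖₁² ≤ (1 + 3k₀)² · 2d₀ · ‖x_{T₀}‖₂²`. Under the hypothesis on the constants the tolerance term
`τ ‖x‖₁²` of Lower-RE is therefore at most `(α/2) ‖x_{T₀}‖₂²`, while its curvature term
`α ‖x‖₂²` is at least `α ‖x_{T₀}‖₂²`.
-/

open Finset Matrix

namespace Finset

variable {ι : Type*} [DecidableEq ι]

theorem sum_le_sum_of_card_eq_of_forall_notMem_le {M : Type*} [AddCommMonoid M] [LinearOrder M]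
    [IsOrderedAddMonoid M] {f : ι → M} {s t : Finset ι} (hcard : #s = #t)
    (htop : ∀ i ∈ t, ∀ j ∉ t, f j ≤ f i) : ∑ i ∈ s, f i ≤ ∑ i ∈ t, f i := by
  obtain ⟨c, hle, hge⟩ : ∃ c, (∀ j ∈ s \ t, f j ≤ c) ∧ ∀ i ∈ t \ s, c ≤ f i := by
    rcases (s \ t).eq_empty_or_nonempty with hst | hst
    · have hts : t \ s = ∅ := by
        rw [← card_eq_zero, ← card_sdiff_comm hcard, hst, card_empty]
      exact ⟨0, by simp [hst], by simp [hts]⟩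
    · obtain ⟨j, hj, hmax⟩ := exists_max_image _ f hst
      exact ⟨f j, hmax, fun i hi => htop i (mem_sdiff.1 hi).1 j (mem_sdiff.1 hj).2⟩
  calc ∑ i ∈ s, f i = ∑ i ∈ s ∩ t, f i + ∑ i ∈ s \ t, f i := (sum_inter_add_sum_sdiff _ _ _).symm
    _ ≤ ∑ i ∈ t ∩ s, f i + #(t \ s) • c := by
      rw [inter_comm, ← card_sdiff_comm hcard]
      gcongr
      exact sum_le_card_nsmul _ _ _ hle
    _ ≤ ∑ i ∈ t ∩ s, f i + ∑ i ∈ t \ s, f i := by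
      gcongr
      exact card_nsmul_le_sum _ _ _ hge
    _ = ∑ i ∈ t, f i := sum_inter_add_sum_sdiff _ _ _

end Finset

section Cone

variable {ι : Type*} [Fintype ι] [DecidableEq ι] {f : ι → ℝ} {s t : Finset ι} {c : ℝ}

theorem sum_le_one_add_mul_sum_of_cone (hcard : #s = #t) (htop : ∀ i ∈ t, ∀ j ∉ t, f j ≤ f i)
    (hc : 0 ≤ c) (hcone : ∑ i ∈ sᶜ, f i ≤ c * ∑ i ∈ s, f i) :
    ∑ i, f i ≤ (1 + c) * ∑ i ∈ t, f i := by
  have hst : ∑ i ∈ s, f i ≤ ∑ i ∈ t, f i := sum_le_sum_of_card_eq_of_forall_notMem_le hcard htop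
  calc ∑ i, f i = ∑ i ∈ s, f i + ∑ i ∈ sᶜ, f i := (sum_add_sum_compl s f).symm
    _ ≤ (1 + c) * ∑ i ∈ s, f i := by linarith
    _ ≤ (1 + c) * ∑ i ∈ t, f i := by gcongr

theorem sq_sum_abs_le_of_cone {x : ι → ℝ} (hcard : #s = #t)
    (htop : ∀ i ∈ t, ∀ j ∉ t, |x j| ≤ |x i|) (hc : 0 ≤ c)
    (hcone : ∑ i ∈ sᶜ, |x i| ≤ c * ∑ i ∈ s, |x i|) :
    (∑ i, |x i|) ^ 2 ≤ (1 + c) ^ 2 * #t * ∑ i ∈ t, x i ^ 2 := by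
  have hl1 := sum_le_one_add_mul_sum_of_cone hcard htop hc hcone
  have hCS : (∑ i ∈ t, |x i|) ^ 2 ≤ #t * ∑ i ∈ t, x i ^ 2 := by
    simpa only [sq_abs] using sq_sum_le_card_mul_sum_sq (s := t) (f := fun i => |x i|)
  calc (∑ i, |x i|) ^ 2 ≤ ((1 + c) * ∑ i ∈ t, |x i|) ^ 2 := by gcongr
    _ = (1 + c) ^ 2 * (∑ i ∈ t, |x i|) ^ 2 := mul_pow _ _ _
    _ ≤ (1 + c) ^ 2 * (#t * ∑ i ∈ t, x i ^ 2) := by gcongr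
    _ = (1 + c) ^ 2 * #t * ∑ i ∈ t, x i ^ 2 := by ring

end Cone

theorem RE_sparse_cone_from_lowerRE_general {m : ℕ} (Ghat : Matrix (Fin m) (Fin m) ℝ)
    (α τ k₀ : ℝ) (hα : 0 < α) (hτ : 0 < τ) (hk₀ : 0 < k₀)
    (d₀ : ℕ)
    (hLRE : ∀ θ : Fin m → ℝ,
      θ ⬝ᵥ Ghat.mulVec θ ≥ α * (∑ i, θ i ^ 2) - τ * (∑ i, |θ i|) ^ 2)
    (hcond : 2 * τ * (1 + 3 * k₀) ^ 2 * d₀ ≤ α / 2) :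
    ∀ x : Fin m → ℝ,
      (∃ I : Finset (Fin m), I.card = 2 * d₀ ∧
        (∑ i ∈ Iᶜ, |x i|) ≤ 3 * k₀ * (∑ i ∈ I, |x i|)) →
      ∀ T₀ : Finset (Fin m), T₀.card = 2 * d₀ →
        (∀ i ∈ T₀, ∀ j ∉ T₀, |x j| ≤ |x i|) →
        x ⬝ᵥ Ghat.mulVec x ≥ α / 2 * (∑ i ∈ T₀, x i ^ 2) := by
  intro x ⟨I, hI, hcone⟩ T₀ hT₀ htop
  have hl1sq := sq_sum_abs_le_of_cone (hI.trans hT₀.symm) htop (by positivity) hcone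
  rw [hT₀, Nat.cast_mul, Nat.cast_ofNat] at hl1sq
  have htol : τ * (∑ i, |x i|) ^ 2 ≤ α / 2 * ∑ i ∈ T₀, x i ^ 2 :=
    calc τ * (∑ i, |x i|) ^ 2 ≤ τ * ((1 + 3 * k₀) ^ 2 * (2 * d₀) * ∑ i ∈ T₀, x i ^ 2) := by
          gcongr
      _ = 2 * τ * (1 + 3 * k₀) ^ 2 * d₀ * ∑ i ∈ T₀, x i ^ 2 := by ring
      _ ≤ α / 2 * ∑ i ∈ T₀, x i ^ 2 := by gcongr
  have hl2 : ∑ i ∈ T₀, x i ^ 2 ≤ ∑ i, x i ^ 2 :=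
    sum_le_sum_of_subset_of_nonneg (subset_univ T₀) fun i _ _ => sq_nonneg _
  linarith [hLRE x, mul_le_mul_of_nonneg_left hl2 hα.le]

/-- RE on a sparse cone from the Lower-RE condition: if
2τ(1+3k₀)² d₀ ≤ α/2, then for every x in the cone W(2d₀, 3k₀), with T₀
the indices of its 2d₀ largest coordinates, xᵀΓ̂x ≥ (α/2)‖x_{T₀}‖₂². -/
theorem RE_sparse_cone_from_lowerRE {m : ℕ} (Ghat : Matrix (Fin m) (Fin m) ℝ)
    (hGhat : Ghat.IsSymm) (α τ k₀ : ℝ) (hα : 0 < α) (hτ : 0 < τ) (hk₀ : 0 < k₀)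
    (d₀ : ℕ) (hd₀ : 1 ≤ d₀)
    (hLRE : ∀ θ : Fin m → ℝ,
      θ ⬝ᵥ Ghat.mulVec θ ≥ α * (∑ i, θ i ^ 2) - τ * (∑ i, |θ i|) ^ 2)
    (hcond : 2 * τ * (1 + 3 * k₀) ^ 2 * d₀ ≤ α / 2) :
    ∀ x : Fin m → ℝ,
      (∃ I : Finset (Fin m), I.card = 2 * d₀ ∧
        (∑ i ∈ Iᶜ, |x i|) ≤ 3 * k₀ * (∑ i ∈ I, |x i|)) →
      ∀ T₀ : Finset (Fin m), T₀.card = 2 * d₀ →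
        (∀ i ∈ T₀, ∀ j ∉ T₀, |x j| ≤ |x i|) →
        x ⬝ᵥ Ghat.mulVec x ≥ α / 2 * (∑ i ∈ T₀, x i ^ 2) :=
  RE_sparse_cone_from_lowerRE_general Ghat α τ k₀ hα hτ hk₀ d₀ hLRE hcond
end

section
/- (RSC-based $\ell_2$-error control from excess loss, deterministic core.) Let $L: \mathbb{R}^m \to \mathbb{R}$ and define $T(\beta_1, \beta_0) = L(\beta_1) - L(\beta_0) - \langle \nabla L(\beta_0), \beta_1 - \beta_0\rangle$. Suppose $T$ satisfies restricted strong convexity: $T(\beta_1,\beta_0) \ge \frac{\alpha_\ell}{2}\|\beta_1-\beta_0\|_2^2 - \tau_\ell\|\beta_1-\beta_0\|_1^2$ for all $\beta_0,\beta_1$, with $\alpha_\ell, \tau_\ell > 0$. Let $\hat\beta$ minimize $\phi(\beta) = L(\beta) + \lambda g(\beta)$ over a convex set $\Omega$ where $g$ is convex and $\lambda \ge 0$, and let $\beta^t \in \Omega$ satisfy $\|\beta^t - \hat\beta\|_1 \le 4\sqrt{d}\,\|\beta^t - \hat\beta\|_2 + (\bar\epsilon + \epsilon)$ for some $\bar\epsilon,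 \epsilon \ge 0$ and integer $d \ge 1$. If $\nu_\ell := 64 d \tau_\ell < \alpha_\ell$, then $\phi(\beta^t) - \phi(\hat\beta) \ge \frac{\alpha_\ell - \nu_\ell}{2}\|\beta^t - \hat\beta\|_2^2 - 2\tau_\ell(\bar\epsilon + \epsilon)^2$. -/
/-!
Comparing `φ = L + λ g` with its values on the segment from `β̂` to `βᵗ`, where the convex `g`
lies below its chord, yields the first-order condition
`⟪∇L β̂, βᵗ - β̂⟫ + λ (g βᵗ - g β̂) ≥ 0`. Hence the excess objective dominates the Bregman
remainder `T(βᵗ, β̂)`, which restricted strong convexity bounds below by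
`α/2 ‖Δ‖₂² - τ ‖Δ‖₁²`; the cone condition and `(a + b)² ≤ 2a² + 2b²` give
`‖Δ‖₁² ≤ 32 d ‖Δ‖₂² + 2 (ε̄ + ε)²`.
-/

theorem IsMinOn.hasDerivAt_nonneg_of_Icc {k : ℝ → ℝ} {k' a b : ℝ} (hab : a < b)
    (hmin : IsMinOn k (Set.Icc a b) a) (hk : HasDerivAt k k' a) : 0 ≤ k' := by
  have hdir : b - a ∈ posTangentConeAt (Set.Icc a b) a :=
    sub_mem_posTangentConeAt_of_segment_subset (segment_eq_Icc hab.le).subset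
  have hslope := hmin.localize.hasFDerivWithinAt_nonneg hk.hasDerivWithinAt hdir
  rw [ContinuousLinearMap.toSpanSingleton_apply, smul_eq_mul] at hslope
  exact nonneg_of_mul_nonneg_right hslope (sub_pos.2 hab)

section

variable {E : Type*} [NormedAddCommGroup E] [InnerProductSpace ℝ E] [CompleteSpace E]

theorem HasGradientAt.hasDerivAt_comp_add_smul {L : E → ℝ} {G x : E} (v : E)
    (hL : HasGradientAt L G x) :
    HasDerivAt (fun t : ℝ => L (x + t • v)) (inner ℝ G v) 0 := by
  have hline : HasDerivAt (fun t : ℝ => x + t • v) v 0 := by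
    simpa using ((hasDerivAt_id (0 : ℝ)).smul_const v).const_add x
  have hL' : HasFDerivAt L (InnerProductSpace.toDual ℝ E G) (x + (0 : ℝ) • v) := by
    simpa using hL.hasFDerivAt
  have hcomp := hL'.comp_hasDerivAt (0 : ℝ) hline
  rwa [InnerProductSpace.toDual_apply_apply] at hcomp

theorem IsMinOn.inner_gradient_add_mul_sub_nonneg {L g : E → ℝ} {G x y : E} {lam : ℝ} {Ω : Set E}
    (hL : HasGradientAt L G x) (hg : ConvexOn ℝ Ω g) (hlam : 0 ≤ lam)
    (hmin : IsMinOn (fun β => L β + lam * g β) Ω x) (hx : x ∈ Ω) (hy : y ∈ Ω) :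
    0 ≤ inner ℝ G (y - x) + lam * (g y - g x) := by
  set k : ℝ → ℝ := fun t => L (x + t • (y - x)) + t * (lam * (g y - g x))
  have hk : HasDerivAt k (inner ℝ G (y - x) + lam * (g y - g x)) 0 :=
    (hL.hasDerivAt_comp_add_smul (y - x)).add (hasDerivAt_mul_const _)
  refine IsMinOn.hasDerivAt_nonneg_of_Icc zero_lt_one (fun t ht => ?_) hk
  have hchord : g (x + t • (y - x)) ≤ g x + t * (g y - g x) := by
    have hconv := hg.2 hx hy (sub_nonneg.2 ht.2) ht.1 (sub_add_cancel 1 t)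
    rw [show (1 - t) • x + t • y = x + t • (y - x) by module, smul_eq_mul, smul_eq_mul] at hconv
    linarith
  have hmin_t := hmin (hg.1.add_smul_sub_mem hx hy ht)
  simp only [k, zero_smul, add_zero, zero_mul, Set.mem_ofPred_eq] at hmin_t ⊢
  linarith [mul_le_mul_of_nonneg_left hchord hlam]

end

theorem sq_le_two_mul_sq_add_two_mul_sq {a b c : ℝ} (ha : 0 ≤ a) (habc : a ≤ b + c) :
    a ^ 2 ≤ 2 * b ^ 2 + 2 * c ^ 2 := by
  nlinarith [sq_nonneg (b - c)]

theorem EuclideanSpace.inner_eq_sum_mul {ι : Type*} [Fintype ι] (x y : EuclideanSpace ℝ ι) :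
    inner ℝ x y = ∑ i, x i * y i := by
  simp [PiLp.inner_apply, mul_comm]

theorem rsc_excess_loss_lower_bound_general {m : ℕ}
    (L g : EuclideanSpace ℝ (Fin m) → ℝ)
    (gradL : EuclideanSpace ℝ (Fin m) → EuclideanSpace ℝ (Fin m))
    (hgrad : ∀ x, HasGradientAt L (gradL x) x)
    (αl τl : ℝ) (hτl : 0 < τl)
    (hRSC : ∀ β₀ β₁ : EuclideanSpace ℝ (Fin m),
      L β₁ - L β₀ - (∑ i, gradL β₀ i * (β₁ i - β₀ i)) ≥
        αl / 2 * (∑ i, (β₁ i - β₀ i) ^ 2) - τl * (∑ i, |β₁ i - β₀ i|) ^ 2)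
    (lam : ℝ) (hlam : 0 ≤ lam)
    (Ω : Set (EuclideanSpace ℝ (Fin m))) (hΩ : Convex ℝ Ω)
    (hg : ConvexOn ℝ Set.univ g)
    (βhat βt : EuclideanSpace ℝ (Fin m)) (hβhat : βhat ∈ Ω) (hβt : βt ∈ Ω)
    (hmin : ∀ β ∈ Ω, L βhat + lam * g βhat ≤ L β + lam * g β)
    (d : ℕ) (εbar ε : ℝ)
    (hl1 : (∑ i, |βt i - βhat i|) ≤
      4 * Real.sqrt d * Real.sqrt (∑ i, (βt i - βhat i) ^ 2) + (εbar + ε)) :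
    (L βt + lam * g βt) - (L βhat + lam * g βhat) ≥
      (αl - 64 * d * τl) / 2 * (∑ i, (βt i - βhat i) ^ 2) -
        2 * τl * (εbar + ε) ^ 2 := by
  have hopt := IsMinOn.inner_gradient_add_mul_sub_nonneg (hgrad βhat)
    (hg.subset (Set.subset_univ Ω) hΩ) hlam hmin hβhat hβt
  simp only [EuclideanSpace.inner_eq_sum_mul, PiLp.sub_apply] at hopt
  have hl1_sq := sq_le_two_mul_sq_add_two_mul_sq (Finset.sum_nonneg fun i _ => abs_nonneg _) hl1
  have hcone : (4 * Real.sqrt d * Real.sqrt (∑ i, (βt i - βhat i) ^ 2)) ^ 2 =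
      16 * d * ∑ i, (βt i - βhat i) ^ 2 := by
    rw [mul_pow, mul_pow, Real.sq_sqrt (Nat.cast_nonneg d),
      Real.sq_sqrt (Finset.sum_nonneg fun i _ => sq_nonneg _)]
    ring
  rw [hcone] at hl1_sq
  linarith [hRSC βhat βt, mul_le_mul_of_nonneg_left hl1_sq hτl.le]

/-- RSC-based ℓ₂-error control from excess loss (deterministic core): if the
loss L satisfies restricted strong convexity, β̂ minimizes φ = L + λ g over a
convex set Ω with g convex, and βᵗ ∈ Ω satisfies the ℓ₁ cone-type bound,
then the excess loss controls ‖βᵗ - β̂‖₂². -/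
theorem rsc_excess_loss_lower_bound {m : ℕ}
    (L g : EuclideanSpace ℝ (Fin m) → ℝ)
    (gradL : EuclideanSpace ℝ (Fin m) → EuclideanSpace ℝ (Fin m))
    (hgrad : ∀ x, HasGradientAt L (gradL x) x)
    (αl τl : ℝ) (hαl : 0 < αl) (hτl : 0 < τl)
    (hRSC : ∀ β₀ β₁ : EuclideanSpace ℝ (Fin m),
      L β₁ - L β₀ - (∑ i, gradL β₀ i * (β₁ i - β₀ i)) ≥
        αl / 2 * (∑ i, (β₁ i - β₀ i) ^ 2) - τl * (∑ i, |β₁ i - β₀ i|) ^ 2)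
    (lam : ℝ) (hlam : 0 ≤ lam)
    (Ω : Set (EuclideanSpace ℝ (Fin m))) (hΩ : Convex ℝ Ω)
    (hg : ConvexOn ℝ Set.univ g)
    (βhat βt : EuclideanSpace ℝ (Fin m)) (hβhat : βhat ∈ Ω) (hβt : βt ∈ Ω)
    (hmin : ∀ β ∈ Ω, L βhat + lam * g βhat ≤ L β + lam * g β)
    (d : ℕ) (hd : 1 ≤ d) (εbar ε : ℝ) (hεbar : 0 ≤ εbar) (hε : 0 ≤ ε)
    (hl1 : (∑ i, |βt i - βhat i|) ≤
      4 * Real.sqrt d * Real.sqrt (∑ i, (βt i - βhat i) ^ 2) + (εbar + ε))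
    (hν : 64 * d * τl < αl) :
    (L βt + lam * g βt) - (L βhat + lam * g βhat) ≥
      (αl - 64 * d * τl) / 2 * (∑ i, (βt i - βhat i) ^ 2) -
        2 * τl * (εbar + ε) ^ 2 :=
  rsc_excess_loss_lower_bound_general L g gradL hgrad αl τl hτl hRSC lam hlam Ω hΩ hg βhat βt hβhat
    hβt hmin d εbar ε hl1
end
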